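/- Let φ' : Cay(G₁, R) → G₂' be the I-system morphism φ'(g) = (0, φ₀(g)), and for g̃₁ ∈ G₁ let φ_{g̃₁} ∈ Aut_I(Cay(G₁, R)) be the automorphism g ↦ g·g̃₁⁻¹. Then a pair (φ_{g̃₁}, Φ_{g̃₂}) satisfies Φ_{g̃₂} ∘ φ' = φ' ∘ φ_{g̃₁} if and only if (g̃₁, g̃₂) ∈ H; consequently Aut_I(φ') = {(φ_{g̃₁}, Φ_{g̃₂}) | (g̃₁, g̃₂) ∈ H} and Aut_I(φ') ≅ H. -/

import Mathlib

universe u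

section GoursatSetup

variable {G₁ G₂ : Type u} [Group G₁] [Group G₂]

/-- `π₁(H)`, the projection of `H` to the first factor. -/
def projFst (H : Subgroup (G₁ × G₂)) : Subgroup G₁ := H.map (MonoidHom.fst G₁ G₂)

/-- `π₂(H)`, the projection of `H` to the second factor. -/
def projSnd (H : Subgroup (G₁ × G₂)) : Subgroup G₂ := H.map (MonoidHom.snd G₁ G₂)

/-- `ι₁⁻¹(H) = {g ∈ G₁ | (g, e) ∈ H}`. -/
def kerFst (H : Subgroup (G₁ × G₂)) : Subgroup G₁ := H.comap (MonoidHom.inl G₁ G₂)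

/-- `ι₂⁻¹(H) = {g ∈ G₂ | (e, g) ∈ H}`. -/
def kerSnd (H : Subgroup (G₁ × G₂)) : Subgroup G₂ := H.comap (MonoidHom.inr G₁ G₂)

theorem kerFst_le_projFst (H : Subgroup (G₁ × G₂)) : kerFst H ≤ projFst H :=
  fun g hg => ⟨(g, 1), hg, rfl⟩

theorem kerSnd_le_projSnd (H : Subgroup (G₁ × G₂)) : kerSnd H ≤ projSnd H :=
  fun g hg => ⟨(1, g), hg, rfl⟩

/-- `ι₁⁻¹(H)` is a normal subgroup of `π₁(H)`. -/
instance kerFst_normal (H : Subgroup (G₁ × G₂)) :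
    ((kerFst H).subgroupOf (projFst H)).Normal := by
  constructor
  intro n hn g
  rw [Subgroup.mem_subgroupOf] at hn ⊢
  obtain ⟨x, hxH, hx⟩ := g.2
  have key : x * (((n : G₁), 1) : G₁ × G₂) * x⁻¹ ∈ H :=
    mul_mem (mul_mem hxH hn) (inv_mem hxH)
  have : x * (((n : G₁), 1) : G₁ × G₂) * x⁻¹ = (((g * n * g⁻¹ : projFst H) : G₁), 1) := by
    ext
    · simp [← hx]
    · simp
  rwa [this] at key

/-- `ι₂⁻¹(H)` is a normal subgroup of `π₂(H)`. -/
instance kerSnd_normal (H : Subgroup (G₁ × G₂)) :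
    ((kerSnd H).subgroupOf (projSnd H)).Normal := by
  constructor
  intro n hn g
  rw [Subgroup.mem_subgroupOf] at hn ⊢
  obtain ⟨x, hxH, hx⟩ := g.2
  have key : x * ((1, (n : G₂)) : G₁ × G₂) * x⁻¹ ∈ H :=
    mul_mem (mul_mem hxH hn) (inv_mem hxH)
  have : x * ((1, (n : G₂)) : G₁ × G₂) * x⁻¹ = (1, ((g * n * g⁻¹ : projSnd H) : G₂)) := by
    ext
    · simp
    · simp [← hx]
  rwa [this] at key

/-- The quotient `V₁ = π₁(H)/ι₁⁻¹(H)`. -/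
abbrev QuotFst (H : Subgroup (G₁ × G₂)) := projFst H ⧸ (kerFst H).subgroupOf (projFst H)

/-- The quotient `π₂(H)/ι₂⁻¹(H)`. -/
abbrev QuotSnd (H : Subgroup (G₁ × G₂)) := projSnd H ⧸ (kerSnd H).subgroupOf (projSnd H)

/-- The vertex set of the auxiliary system `G_{ι₁}` : it is `V₁` if `π₁(H) = G₁`
(the extra summand is then empty) and `V₁ ⊔ {s}` otherwise. -/
abbrev AuxVert (H : Subgroup (G₁ × G₂)) := QuotFst H ⊕ PLift (projFst H ≠ ⊤)

/-- The auxiliary binary relational system `G_{ι₁}` over the label set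
`I₁ = I_{ι₁} ⊔ (J₁ \ {0})`. -/
def auxRel (H : Subgroup (G₁ × G₂)) {Iι J₁ : Type u} (j₁0 : J₁) (r : J₁ → G₁) :
    (Iι ⊕ {j : J₁ // j ≠ j₁0}) → AuxVert H → AuxVert H → Prop
  | _,      .inr _, .inr _ => True
  | .inl _, .inl a, .inl b => b = a
  | .inr j, .inl a, .inl b =>
      ∃ h : r j.val ∈ projFst H, b = QuotientGroup.mk ⟨r j.val, h⟩ * a
  | .inl _, .inl _, .inr _ => False
  | .inl _, .inr _, .inl _ => False
  | .inr j, .inl _, .inr _ => r j.val ∉ projFst H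
  | .inr j, .inr _, .inl _ => r j.val ∉ projFst H

/-- The generating family `R = (r_i)_{i ∈ I₁}` of `G₁`. -/
def cayGenFst (H : Subgroup (G₁ × G₂)) {Iι J₁ : Type u} (rι : Iι → kerFst H) (j₁0 : J₁)
    (r : J₁ → G₁) : (Iι ⊕ {j : J₁ // j ≠ j₁0}) → G₁
  | .inl i => (rι i : G₁)
  | .inr j => r j.val

/-- The Cayley diagram `Cay(G₁, R)` as an `I₁`-system. -/
def cayRelFst (H : Subgroup (G₁ × G₂)) {Iι J₁ : Type u} (rι : Iι → kerFst H) (j₁0 : J₁)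
    (r : J₁ → G₁) (i : Iι ⊕ {j : J₁ // j ≠ j₁0}) (g g' : G₁) : Prop :=
  g' = cayGenFst H rι j₁0 r i * g

/-- The map `φ₀ : G₁ → V(G_{ι₁})`, sending `g` to `[g]` if `g ∈ π₁(H)` and to `s`
otherwise. -/
noncomputable def phiZero (H : Subgroup (G₁ × G₂)) (g : G₁) : AuxVert H :=
  letI := Classical.dec (g ∈ projFst H)
  if h : g ∈ projFst H then .inl (QuotientGroup.mk ⟨g, h⟩)
  else .inr ⟨fun hP => h (by rw [hP]; exact Subgroup.mem_top g)⟩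

end GoursatSetup

section MainSystem

variable {G₁ G₂ : Type u} [Group G₁] [Group G₂]

/-- The vertex set of the system `G₂'`: `G₂ ⊔ (⊔_{j ∈ J₂} V₂ʲ)` with
`V₂ʲ = {j} × V(G_{ι₁})`. -/
abbrev MainVert (H : Subgroup (G₁ × G₂)) (J₂ : Type u) := G₂ ⊕ (J₂ × AuxVert H)

/-- The full label set `I = I₁ ⊔ I₂ ⊔ {θ}`. -/
abbrev FullLabel (Iι J₁ Iπ J₂ : Type u) (j₁0 : J₁) (j₂0 : J₂) :=
  (Iι ⊕ {j : J₁ // j ≠ j₁0}) ⊕ ((Iπ ⊕ {j : J₂ // j ≠ j₂0}) ⊕ PUnit.{u + 1})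

/-- The generating family `S = (s_i)_{i ∈ I₂}` of `G₂`. -/
def cayGenSnd (H : Subgroup (G₁ × G₂)) {Iπ J₂ : Type u} (sπ : Iπ → projSnd H) (j₂0 : J₂)
    (s : J₂ → G₂) : (Iπ ⊕ {j : J₂ // j ≠ j₂0}) → G₂
  | .inl i => (sπ i : G₂)
  | .inr j => s j.val

/-- The binary relational system `G₂'` over the label set `I = I₁ ⊔ I₂ ⊔ {θ}`. -/
def mainRel (H : Subgroup (G₁ × G₂)) {Iι J₁ Iπ J₂ : Type u} (j₁0 : J₁) (r : J₁ → G₁)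
    (sπ : Iπ → projSnd H) (j₂0 : J₂) (s : J₂ → G₂)
    (k₂ : G₂ → projSnd H) (jj₂ : G₂ → J₂) (θ : QuotFst H ≃* QuotSnd H) :
    FullLabel Iι J₁ Iπ J₂ j₁0 j₂0 → MainVert H J₂ → MainVert H J₂ → Prop
  | .inl i₁, .inr (j, v), .inr (j', v') => j' = j ∧ auxRel H j₁0 r i₁ v v'
  | .inr (.inl i₂), .inl g, .inl g' => g' = cayGenSnd H sπ j₂0 s i₂ * g
  | .inr (.inr _), .inl g, .inr (j, v) =>
      j = jj₂ g ∧ v = .inl (θ.symm (QuotientGroup.mk (k₂ g)))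
  | _, _, _ => False

/-- The self-map `Φ_{g̃}` of the vertex set of `G₂'` induced by `g̃ ∈ G₂`. -/
def mainPhi (H : Subgroup (G₁ × G₂)) {J₂ : Type u} (s : J₂ → G₂)
    (k₂ : G₂ → projSnd H) (jj₂ : G₂ → J₂) (θ : QuotFst H ≃* QuotSnd H)
    (gt : G₂) : MainVert H J₂ → MainVert H J₂
  | .inl g => .inl (g * gt⁻¹)
  | .inr (j, .inl a) =>
      .inr (jj₂ (s j * gt⁻¹),
        .inl (a * θ.symm (QuotientGroup.mk (k₂ (s j * gt⁻¹)))))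
  | .inr (j, .inr u) => .inr (jj₂ (s j * gt⁻¹), .inr u)

/-- The Cayley diagram `Cay(G₁, R)` viewed as an `I`-system over the full label set,
with no edges of label outside `I₁`. -/
def cayRelFull (H : Subgroup (G₁ × G₂)) {Iι J₁ Iπ J₂ : Type u} (rι : Iι → kerFst H)
    (j₁0 : J₁) (r : J₁ → G₁) (j₂0 : J₂) :
    FullLabel Iι J₁ Iπ J₂ j₁0 j₂0 → G₁ → G₁ → Prop
  | .inl i₁ => fun g g' => g' = cayGenFst H rι j₁0 r i₁ * g
  | .inr _ => fun _ _ => False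

/-- The morphism `φ' : Cay(G₁, R) → G₂'`, `φ'(g) = (0, φ₀(g))`. -/
noncomputable def mainArrow (H : Subgroup (G₁ × G₂)) {J₂ : Type u} (j₂0 : J₂) (g : G₁) :
    MainVert H J₂ :=
  .inr (j₂0, phiZero H g)

end MainSystem

/-- The automorphism group of a binary relational system `R` over a label set `I`,
as a subgroup of the permutations of the vertex set. -/
def relAut {I V : Type*} (R : I → V → V → Prop) : Subgroup (Equiv.Perm V) where
  carrier := {e | ∀ i v w, R i v w ↔ R i (e v) (e w)}
  one_mem' := by intro i v w; simp
  mul_mem' := by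
    intro a b ha hb i v w
    simpa [Equiv.Perm.mul_apply] using (hb i v w).trans (ha i (b v) (b w))
  inv_mem' := by
    intro a ha i v w
    simpa [Equiv.Perm.inv_def, Equiv.apply_symm_apply] using (ha i (a⁻¹ v) (a⁻¹ w)).symm

/-- The automorphism group of a morphism of binary relational systems, i.e. the subgroup of
`Aut(R₁) × Aut(R₂)` of pairs commuting with `f`. -/
def relArrowAut {I V₁ V₂ : Type*} (R₁ : I → V₁ → V₁ → Prop) (R₂ : I → V₂ → V₂ → Prop)
    (f : V₁ → V₂) : Subgroup (relAut R₁ × relAut R₂) where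
  carrier := {p | ∀ v, f ((p.1 : Equiv.Perm V₁) v) = (p.2 : Equiv.Perm V₂) (f v)}
  one_mem' := by intro v; simp
  mul_mem' := by
    intro a b ha hb v
    simp only [Prod.fst_mul, Prod.snd_mul, Subgroup.coe_mul, Equiv.Perm.mul_apply]
    rw [ha ((b.1 : Equiv.Perm V₁) v), hb v]
  inv_mem' := by
    intro a ha v
    simp only [Prod.fst_inv, Prod.snd_inv, Subgroup.coe_inv]
    have h := ha ((a.1 : Equiv.Perm V₁)⁻¹ v)
    simp only [Equiv.Perm.inv_def, Equiv.apply_symm_apply] at h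
    rw [Equiv.Perm.inv_def, Equiv.Perm.inv_def, h, Equiv.symm_apply_apply]


/-!
An automorphism of `Cay(G₁, R)` commutes with left multiplication by the generators, hence is
right multiplication by some `g̃₁⁻¹`. An automorphism of `G₂'` preserves `G₂` (the only vertices
with an outgoing `θ`-edge) and, by the same argument with the generators of `G₂`, acts there as
`Φ_{g̃₂}` for some `g̃₂`. An automorphism fixing `G₂` pointwise is the identity: each `(j, [g])` is
the unique `θ`-neighbour of a vertex of `G₂`, and each `(j, s)` the unique neighbour of `(j, [e])`
along a label `r_j ∉ π₁(H)`. Finally `Φ_{g̃₂} ∘ φ' = φ' ∘ φ_{g̃₁}` evaluated at `e` forces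
`g̃₂ ∈ π₂(H)` and `θ [g̃₁⁻¹] = [g̃₂⁻¹]`, i.e. `(g̃₁, g̃₂) ∈ H`.
-/

theorem apply_eq_mul_apply_one_of_closure_eq_top {G : Type*} [Group G] {S : Set G}
    (hS : Subgroup.closure S = ⊤) {f : G → G} (hf : ∀ c ∈ S, ∀ g, f (c * g) = c * f g)
    (g : G) : f g = g * f 1 := by
  have key : ∀ x ∈ Subgroup.closure S, ∀ g, f (x * g) = x * f g := by
    intro x hx
    induction hx using Subgroup.closure_induction with
    | mem c hc => exact hf c hc
    | one => simp
    | mul x y _ _ hx hy => intro g; rw [mul_assoc, hx, hy, mul_assoc]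
    | inv x _ hx => intro g; rw [eq_inv_mul_iff_mul_eq, ← hx, mul_inv_cancel_left]
  simpa using key g (hS ▸ Subgroup.mem_top g) 1

section RelAut

variable {I V : Type*} {R : I → V → V → Prop}

def relAutHom {G : Type*} [Group G] (ρ : G →* Equiv.Perm V)
    (hρ : ∀ g i v w, R i v w → R i (ρ g v) (ρ g w)) : G →* relAut R :=
  ρ.codRestrict (relAut R) fun g i v w =>
    ⟨hρ g i v w, fun h => by simpa [← Equiv.Perm.mul_apply, ← map_mul] using hρ g⁻¹ i _ _ h⟩

theorem apply_eq_self_of_rel_unique {e : Equiv.Perm V} (he : e ∈ relAut R) {i : I} {v w : V}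
    (hvw : R i v w) (hv : e v = v) (hw : ∀ w', R i v w' → w' = w) : e w = w :=
  hw _ (hv ▸ (he i v w).mp hvw)

end RelAut

def mulRightInvHom (G : Type*) [Group G] : G →* Equiv.Perm G where
  toFun g := Equiv.mulRight g⁻¹
  map_one' := by ext; simp
  map_mul' a b := by ext; simp [mul_assoc]

theorem mulRightInvHom_injective (G : Type*) [Group G] :
    Function.Injective (mulRightInvHom G) := fun a b h => by
  have : (1 : G) * a⁻¹ = 1 * b⁻¹ := congrArg (fun e : Equiv.Perm G => e 1) h
  simpa using this

section Transversal

variable {G₁ G₂ : Type u} [Group G₁] [Group G₂] {H : Subgroup (G₁ × G₂)} {J₂ : Type u}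
  {s : J₂ → G₂} {k₂ : G₂ → projSnd H} {jj₂ : G₂ → J₂}
  (huniq : ∀ (g : G₂) (κ : projSnd H) (l : J₂), (κ : G₂) * s l = g → κ = k₂ g ∧ l = jj₂ g)
include huniq

theorem k₂_jj₂_s (j : J₂) : k₂ (s j) = 1 ∧ jj₂ (s j) = j := by
  obtain ⟨h₁, h₂⟩ := huniq (s j) 1 j (one_mul _)
  exact ⟨h₁.symm, h₂.symm⟩

theorem k₂_jj₂_of_mem {j₂0 : J₂} (hs0 : s j₂0 = 1) {g : G₂} (hg : g ∈ projSnd H) :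
    k₂ g = ⟨g, hg⟩ ∧ jj₂ g = j₂0 := by
  obtain ⟨h₁, h₂⟩ := huniq g ⟨g, hg⟩ j₂0 (by rw [hs0, mul_one])
  exact ⟨h₁.symm, h₂.symm⟩

variable (hdec : ∀ g : G₂, (k₂ g : G₂) * s (jj₂ g) = g)
include hdec

theorem k₂_jj₂_mul_left (κ : projSnd H) (g : G₂) :
    k₂ ((κ : G₂) * g) = κ * k₂ g ∧ jj₂ ((κ : G₂) * g) = jj₂ g := by
  obtain ⟨h₁, h₂⟩ := huniq ((κ : G₂) * g) (κ * k₂ g) (jj₂ g) (by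
    rw [Subgroup.coe_mul, mul_assoc, hdec])
  exact ⟨h₁.symm, h₂.symm⟩

theorem k₂_jj₂_mul_right (g x : G₂) :
    k₂ (g * x) = k₂ g * k₂ (s (jj₂ g) * x) ∧ jj₂ (g * x) = jj₂ (s (jj₂ g) * x) := by
  have h := k₂_jj₂_mul_left huniq hdec (k₂ g) (s (jj₂ g) * x)
  rwa [← mul_assoc, hdec] at h

end Transversal

section PhiZero

variable {G₁ G₂ : Type u} [Group G₁] [Group G₂] (H : Subgroup (G₁ × G₂))

theorem phiZero_of_mem {g : G₁} (hg : g ∈ projFst H) :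
    phiZero H g = .inl (QuotientGroup.mk ⟨g, hg⟩) :=
  dif_pos hg

theorem phiZero_of_not_mem {g : G₁} (hg : g ∉ projFst H) (u : PLift (projFst H ≠ ⊤)) :
    phiZero H g = .inr u :=
  (dif_neg hg).trans (congrArg Sum.inr (Subsingleton.elim _ _))

theorem phiZero_one : phiZero H 1 = .inl 1 :=
  phiZero_of_mem H (one_mem _)

theorem phiZero_mul_left (c : projFst H) (g : G₁) :
    phiZero H (c * g) = Sum.map (QuotientGroup.mk c * ·) id (phiZero H g) := by
  by_cases hg : g ∈ projFst H
  · rw [phiZero_of_mem H hg, phiZero_of_mem H (mul_mem c.2 hg)]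
    rfl
  · have hcg : (c : G₁) * g ∉ projFst H := fun h => hg (by simpa using mul_mem (inv_mem c.2) h)
    let u : PLift (projFst H ≠ ⊤) := ⟨fun h => hg (h ▸ Subgroup.mem_top g)⟩
    rw [phiZero_of_not_mem H hg u, phiZero_of_not_mem H hcg u]
    rfl

theorem phiZero_mul_right (c : projFst H) (g : G₁) :
    phiZero H (g * c) = Sum.map (· * QuotientGroup.mk c) id (phiZero H g) := by
  by_cases hg : g ∈ projFst H
  · rw [phiZero_of_mem H hg, phiZero_of_mem H (mul_mem hg c.2)]
    rfl
  · have hgc : g * c ∉ projFst H := fun h => hg (by simpa using mul_mem h (inv_mem c.2))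
    let u : PLift (projFst H ≠ ⊤) := ⟨fun h => hg (h ▸ Subgroup.mem_top g)⟩
    rw [phiZero_of_not_mem H hg u, phiZero_of_not_mem H hgc u]
    rfl

theorem auxRel_phiZero {Iι J₁ : Type u} (rι : Iι → kerFst H) (j₁0 : J₁) (r : J₁ → G₁)
    (i : Iι ⊕ {j : J₁ // j ≠ j₁0}) (g : G₁) :
    auxRel H j₁0 r i (phiZero H g) (phiZero H (cayGenFst H rι j₁0 r i * g)) := by
  rcases i with i | j
  · let c : projFst H := ⟨rι i, kerFst_le_projFst H (rι i).2⟩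
    have hc : (QuotientGroup.mk c : QuotFst H) = 1 :=
      (QuotientGroup.eq_one_iff _).mpr (Subgroup.mem_subgroupOf.mpr (rι i).2)
    rw [cayGenFst, phiZero_mul_left H c, hc]
    rcases phiZero H g <;> simp [auxRel]
  · by_cases hc : r j ∈ projFst H
    · rw [cayGenFst, phiZero_mul_left H ⟨r j, hc⟩]
      rcases phiZero H g with a | u
      · exact ⟨hc, rfl⟩
      · trivial
    · by_cases hg : g ∈ projFst H
      · have hcg : r j * g ∉ projFst H := fun h => hc (by simpa using mul_mem h (inv_mem hg))
        rw [cayGenFst, phiZero_of_mem H hg,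
          phiZero_of_not_mem H hcg ⟨fun h => hc (h ▸ Subgroup.mem_top _)⟩]
        exact hc
      · rw [phiZero_of_not_mem H hg ⟨fun h => hg (h ▸ Subgroup.mem_top _)⟩]
        rcases phiZero H (cayGenFst H rι j₁0 r (.inr j) * g) with a | u
        · exact hc
        · trivial

end PhiZero

section Systems

variable {G₁ G₂ : Type u} [Group G₁] [Group G₂] (H : Subgroup (G₁ × G₂)) {Iι J₁ Iπ J₂ : Type u}
  (rι : Iι → kerFst H) (j₁0 : J₁) (r : J₁ → G₁) (sπ : Iπ → projSnd H) (j₂0 : J₂) (s : J₂ → G₂)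
  (k₂ : G₂ → projSnd H) (jj₂ : G₂ → J₂) (θ : QuotFst H ≃* QuotSnd H)
  (hr0 : r j₁0 = 1) (hcos : ∀ g : G₁, ∃! j : J₁, g * (r j)⁻¹ ∈ kerFst H)
  (hKgen : Subgroup.closure (Set.range fun i => ((rι i : G₁))) = kerFst H) (hs0 : s j₂0 = 1)
  (hPgen : Subgroup.closure (Set.range fun i => ((sπ i : G₂))) = projSnd H)
  (hdec : ∀ g : G₂, (k₂ g : G₂) * s (jj₂ g) = g)
  (huniq : ∀ (g : G₂) (κ : projSnd H) (l : J₂), (κ : G₂) * s l = g → κ = k₂ g ∧ l = jj₂ g)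
  (hθ : ∀ (x : projFst H) (y : projSnd H),
    θ (QuotientGroup.mk x) = QuotientGroup.mk y ↔ ((x : G₁), (y : G₂)) ∈ H)

include hr0 hcos hKgen in
theorem closure_range_cayGenFst : Subgroup.closure (Set.range (cayGenFst H rι j₁0 r)) = ⊤ := by
  set C := Subgroup.closure (Set.range (cayGenFst H rι j₁0 r))
  have hK : kerFst H ≤ C :=
    hKgen ▸ Subgroup.closure_mono (by rintro _ ⟨i, rfl⟩; exact ⟨.inl i, rfl⟩)
  have hr : ∀ j, r j ∈ C := fun j => by
    by_cases hj : j = j₁0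
    · exact hj ▸ hr0 ▸ one_mem C
    · exact Subgroup.subset_closure ⟨.inr ⟨j, hj⟩, rfl⟩
  refine eq_top_iff.mpr fun g _ => ?_
  obtain ⟨j, hj, -⟩ := hcos g
  simpa using mul_mem (hK hj) (hr j)

include hs0 hPgen hdec in
theorem closure_range_cayGenSnd : Subgroup.closure (Set.range (cayGenSnd H sπ j₂0 s)) = ⊤ := by
  set C := Subgroup.closure (Set.range (cayGenSnd H sπ j₂0 s))
  have hP : projSnd H ≤ C :=
    hPgen ▸ Subgroup.closure_mono (by rintro _ ⟨i, rfl⟩; exact ⟨.inl i, rfl⟩)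
  have hs : ∀ j, s j ∈ C := fun j => by
    by_cases hj : j = j₂0
    · exact hj ▸ hs0 ▸ one_mem C
    · exact Subgroup.subset_closure ⟨.inr ⟨j, hj⟩, rfl⟩
  refine eq_top_iff.mpr fun g _ => ?_
  simpa [hdec] using mul_mem (hP (k₂ g).2) (hs (jj₂ g))

theorem mainArrow_rel (i : FullLabel Iι J₁ Iπ J₂ j₁0 j₂0) (g g' : G₁)
    (h : cayRelFull H rι j₁0 r j₂0 i g g') :
    mainRel H j₁0 r sπ j₂0 s k₂ jj₂ θ i (mainArrow H j₂0 g) (mainArrow H j₂0 g') := by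
  rcases i with i₁ | _
  · obtain rfl : g' = cayGenFst H rι j₁0 r i₁ * g := h
    exact ⟨rfl, auxRel_phiZero H rι j₁0 r i₁ g⟩
  · exact h.elim

def cayAut : G₁ →* relAut (cayRelFull H (Iπ := Iπ) rι j₁0 r j₂0) :=
  relAutHom (mulRightInvHom G₁) fun g i v w h => by
    rcases i with i₁ | _
    · obtain rfl : w = cayGenFst H rι j₁0 r i₁ * v := h
      exact mul_assoc _ _ _
    · exact h.elim

theorem coe_cayAut (g₁ : G₁) :
    ⇑(cayAut H (Iπ := Iπ) rι j₁0 r j₂0 g₁ : Equiv.Perm G₁) = fun g => g * g₁⁻¹ :=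
  rfl

include hr0 hcos hKgen in
theorem cayAut_surjective : Function.Surjective (cayAut H (Iπ := Iπ) rι j₁0 r j₂0) := by
  intro σ
  refine ⟨((σ : Equiv.Perm G₁) 1)⁻¹, Subtype.ext (Equiv.ext fun g => ?_)⟩
  rw [coe_cayAut, inv_inv]
  refine (apply_eq_mul_apply_one_of_closure_eq_top
    (closure_range_cayGenFst H rι j₁0 r hr0 hcos hKgen) ?_ g).symm
  rintro _ ⟨i, rfl⟩ g
  exact (σ.2 (.inl i) g _).mp rfl

theorem mainPhi_inr (g : G₂) (j : J₂) (v : AuxVert H) :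
    mainPhi H s k₂ jj₂ θ g (.inr (j, v)) = .inr (jj₂ (s j * g⁻¹),
      Sum.map (· * θ.symm (QuotientGroup.mk (k₂ (s j * g⁻¹)))) id v) := by
  rcases v with _ | _ <;> rfl

theorem auxRel_map_mul_right {i : Iι ⊕ {j : J₁ // j ≠ j₁0}} {v w : AuxVert H} (t : QuotFst H)
    (h : auxRel H j₁0 r i v w) :
    auxRel H j₁0 r i (Sum.map (· * t) id v) (Sum.map (· * t) id w) := by
  rcases i with _ | _ <;> rcases v with _ | _ <;> rcases w with _ | _ <;>
    simp only [auxRel, Sum.map_inl, Sum.map_inr, id] at h ⊢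
  · rw [h]
  · obtain ⟨hm, rfl⟩ := h
    exact ⟨hm, mul_assoc _ _ _⟩
  all_goals exact h

include huniq in
theorem mainPhi_one (v : MainVert H J₂) : mainPhi H s k₂ jj₂ θ 1 v = v := by
  rcases v with g | ⟨j, v⟩
  · simp [mainPhi]
  · rw [mainPhi_inr, inv_one, mul_one, (k₂_jj₂_s huniq j).1, (k₂_jj₂_s huniq j).2]
    rcases v <;> simp

include hdec huniq in
theorem mainPhi_mul (a b : G₂) (v : MainVert H J₂) :
    mainPhi H s k₂ jj₂ θ (a * b) v = mainPhi H s k₂ jj₂ θ a (mainPhi H s k₂ jj₂ θ b v) := by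
  rcases v with g | ⟨j, v⟩
  · simp [mainPhi, mul_assoc]
  · obtain ⟨hk, hj⟩ := k₂_jj₂_mul_right huniq hdec (s j * b⁻¹) a⁻¹
    simp only [mainPhi_inr, mul_inv_rev, ← mul_assoc, hk, hj]
    rcases v <;> simp [mul_assoc]

def mainPhiHom : G₂ →* Equiv.Perm (MainVert H J₂) where
  toFun g :=
    { toFun := mainPhi H s k₂ jj₂ θ g
      invFun := mainPhi H s k₂ jj₂ θ g⁻¹
      left_inv v := by rw [← mainPhi_mul H s k₂ jj₂ θ hdec huniq, inv_mul_cancel,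
        mainPhi_one H s k₂ jj₂ θ huniq]
      right_inv v := by rw [← mainPhi_mul H s k₂ jj₂ θ hdec huniq, mul_inv_cancel,
        mainPhi_one H s k₂ jj₂ θ huniq] }
  map_one' := Equiv.ext (mainPhi_one H s k₂ jj₂ θ huniq)
  map_mul' a b := Equiv.ext (mainPhi_mul H s k₂ jj₂ θ hdec huniq a b)

include hdec huniq in
theorem mainPhi_rel (g : G₂) {i : FullLabel Iι J₁ Iπ J₂ j₁0 j₂0} {v w : MainVert H J₂}
    (h : mainRel H j₁0 r sπ j₂0 s k₂ jj₂ θ i v w) :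
    mainRel H j₁0 r sπ j₂0 s k₂ jj₂ θ i
      (mainPhi H s k₂ jj₂ θ g v) (mainPhi H s k₂ jj₂ θ g w) := by
  rcases i with i₁ | i₂ | _ <;> rcases v with x | ⟨j, v⟩ <;> rcases w with y | ⟨j', w⟩ <;>
    simp only [mainRel] at h
  · obtain ⟨rfl, h⟩ := h
    rw [mainPhi_inr, mainPhi_inr]
    exact ⟨rfl, auxRel_map_mul_right H j₁0 r _ h⟩
  · rw [h]
    exact mul_assoc _ _ _
  · obtain ⟨rfl, rfl⟩ := h
    obtain ⟨hk, hj⟩ := k₂_jj₂_mul_right huniq hdec x g⁻¹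
    rw [mainPhi_inr]
    exact ⟨hj.symm, by simp [hk]⟩

def mainPhiAut : G₂ →* relAut (mainRel H (Iι := Iι) j₁0 r sπ j₂0 s k₂ jj₂ θ) :=
  relAutHom (mainPhiHom H s k₂ jj₂ θ hdec huniq) fun g _ _ _ =>
    mainPhi_rel H j₁0 r sπ j₂0 s k₂ jj₂ θ hdec huniq g

theorem coe_mainPhiAut (g₂ : G₂) :
    ⇑(mainPhiAut H (Iι := Iι) j₁0 r sπ j₂0 s k₂ jj₂ θ hdec huniq g₂ :
      Equiv.Perm (MainVert H J₂)) = mainPhi H s k₂ jj₂ θ g₂ :=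
  rfl

theorem mainPhiAut_injective :
    Function.Injective (mainPhiAut H (Iι := Iι) j₁0 r sπ j₂0 s k₂ jj₂ θ hdec huniq) :=
  fun a b h => by
    have : (Sum.inl (1 * a⁻¹) : MainVert H J₂) = .inl (1 * b⁻¹) :=
      congrArg (fun e : relAut _ => (e : Equiv.Perm (MainVert H J₂)) (.inl 1)) h
    simpa using this

include hs0 in
theorem mainPhi_mainArrow (g₂ : G₂) (g : G₁) :
    mainPhi H s k₂ jj₂ θ g₂ (mainArrow H j₂0 g) = .inr (jj₂ g₂⁻¹,
      Sum.map (· * θ.symm (QuotientGroup.mk (k₂ g₂⁻¹))) id (phiZero H g)) := by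
  rw [mainArrow, mainPhi_inr, hs0, one_mul]

include hs0 hdec huniq hθ in
theorem mainPhi_mainArrow_eq_iff_mem (g₁ : G₁) (g₂ : G₂) :
    (∀ g : G₁, mainPhi H s k₂ jj₂ θ g₂ (mainArrow H j₂0 g) = mainArrow H j₂0 (g * g₁⁻¹))
      ↔ (g₁, g₂) ∈ H := by
  simp only [mainPhi_mainArrow H j₂0 s k₂ jj₂ θ hs0]
  simp only [mainArrow, Sum.inr.injEq, Prod.mk.injEq]
  constructor
  · intro hcomm
    obtain ⟨hj, hv⟩ := hcomm 1
    rw [phiZero_one, one_mul] at hv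
    have hk : (k₂ g₂⁻¹ : G₂) = g₂⁻¹ := by simpa [hj, hs0] using hdec g₂⁻¹
    by_cases hg₁ : g₁⁻¹ ∈ projFst H
    · rw [phiZero_of_mem H hg₁, Sum.map_inl, Sum.inl.injEq, one_mul,
        MulEquiv.symm_apply_eq, eq_comm, hθ, hk] at hv
      simpa using inv_mem hv
    · rw [phiZero_of_not_mem H hg₁ ⟨fun h => hg₁ (h ▸ Subgroup.mem_top _)⟩] at hv
      exact (Sum.inl_ne_inr hv).elim
  · intro hg g
    have hg₁ : g₁⁻¹ ∈ projFst H := inv_mem ⟨_, hg, rfl⟩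
    have hg₂ : g₂⁻¹ ∈ projSnd H := inv_mem ⟨_, hg, rfl⟩
    obtain ⟨hk, hj⟩ := k₂_jj₂_of_mem huniq hs0 hg₂
    have hθ' : θ.symm (QuotientGroup.mk (k₂ g₂⁻¹)) = QuotientGroup.mk ⟨g₁⁻¹, hg₁⟩ := by
      rw [hk, MulEquiv.symm_apply_eq, eq_comm, hθ]
      exact inv_mem hg
    rw [hj, hθ', ← phiZero_mul_right H ⟨g₁⁻¹, hg₁⟩]
    exact ⟨rfl, rfl⟩

theorem exists_apply_inl_eq_inl (Φ : relAut (mainRel H (Iι := Iι) j₁0 r sπ j₂0 s k₂ jj₂ θ))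
    (g : G₂) : ∃ g', (Φ : Equiv.Perm (MainVert H J₂)) (.inl g) = .inl g' := by
  have h := (Φ.2 (.inr (.inr PUnit.unit)) (.inl g)
    (.inr (jj₂ g, .inl (θ.symm (QuotientGroup.mk (k₂ g)))))).mp ⟨rfl, rfl⟩
  revert h
  generalize (Φ : Equiv.Perm (MainVert H J₂)) (.inl g) = v
  generalize (Φ : Equiv.Perm (MainVert H J₂)) (.inr _) = w
  rcases v with g' | _
  · exact fun _ => ⟨g', rfl⟩
  · rcases w with _ | _ <;> exact False.elim

include hr0 hcos in
theorem exists_rep_not_mem_projFst (hP : projFst H ≠ ⊤) :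
    ∃ j : {j : J₁ // j ≠ j₁0}, r j ∉ projFst H := by
  obtain ⟨g, hg⟩ : ∃ g, g ∉ projFst H := by
    by_contra! h
    exact hP (eq_top_iff.mpr fun g _ => h g)
  obtain ⟨j, hj, -⟩ := hcos g
  have hrj : r j ∉ projFst H := fun h => hg (by simpa using mul_mem (kerFst_le_projFst H hj) h)
  exact ⟨⟨j, fun h => hrj (h ▸ hr0 ▸ one_mem _)⟩, hrj⟩

include hr0 hcos hdec huniq in
theorem eq_one_of_apply_inl_eq (τ : relAut (mainRel H (Iι := Iι) j₁0 r sπ j₂0 s k₂ jj₂ θ))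
    (hτ : ∀ g, (τ : Equiv.Perm (MainVert H J₂)) (.inl g) = .inl g) : τ = 1 := by
  have hquot : ∀ j a,
      (τ : Equiv.Perm (MainVert H J₂)) (.inr (j, .inl a)) = .inr (j, .inl a) := by
    intro j a
    obtain ⟨κ, hκ⟩ := QuotientGroup.mk_surjective (θ a)
    obtain ⟨hk, hj⟩ := k₂_jj₂_mul_left huniq hdec κ (s j)
    rw [(k₂_jj₂_s huniq j).1, mul_one] at hk
    rw [(k₂_jj₂_s huniq j).2] at hj
    have hedge : mainRel H (Iι := Iι) j₁0 r sπ j₂0 s k₂ jj₂ θ (.inr (.inr PUnit.unit))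
        (.inl (κ * s j)) (.inr (j, .inl a)) :=
      ⟨hj.symm, by rw [hk, hκ, θ.symm_apply_apply]⟩
    refine apply_eq_self_of_rel_unique τ.2 hedge (hτ _) ?_
    rintro (_ | ⟨j', v'⟩) h
    · exact h.elim
    · obtain ⟨rfl, rfl⟩ := h
      rw [hj, hk, hκ, θ.symm_apply_apply]
  have hextra : ∀ j u,
      (τ : Equiv.Perm (MainVert H J₂)) (.inr (j, .inr u)) = .inr (j, .inr u) := by
    intro j u
    obtain ⟨js, hjs⟩ := exists_rep_not_mem_projFst H j₁0 r hr0 hcos u.down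
    have hedge : mainRel H (Iι := Iι) j₁0 r sπ j₂0 s k₂ jj₂ θ (.inl (.inr js))
        (.inr (j, .inl 1)) (.inr (j, .inr u)) := ⟨rfl, hjs⟩
    refine apply_eq_self_of_rel_unique τ.2 hedge (hquot j 1) ?_
    rintro (_ | ⟨j', _ | u'⟩) h
    · exact h.elim
    · exact (hjs h.2.1).elim
    · obtain ⟨rfl, -⟩ := h
      rw [Subsingleton.elim u' u]
  refine Subtype.ext (Equiv.ext ?_)
  rintro (g | ⟨j, a | u⟩)
  exacts [hτ g, hquot j a, hextra j u]

include hr0 hcos hs0 hPgen in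
theorem mainPhiAut_surjective :
    Function.Surjective (mainPhiAut H (Iι := Iι) j₁0 r sπ j₂0 s k₂ jj₂ θ hdec huniq) := by
  intro Φ
  choose ψ hψ using exists_apply_inl_eq_inl H j₁0 r sπ j₂0 s k₂ jj₂ θ Φ
  have hψ_mul : ∀ g, ψ g = g * ψ 1 := by
    refine apply_eq_mul_apply_one_of_closure_eq_top
      (closure_range_cayGenSnd H sπ j₂0 s k₂ jj₂ hs0 hPgen hdec) ?_
    rintro _ ⟨i, rfl⟩ g
    have h := (Φ.2 (.inr (.inl i)) (.inl g) (.inl (cayGenSnd H sπ j₂0 s i * g))).mp rfl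
    rwa [hψ, hψ] at h
  set Φ₀ := mainPhiAut H (Iι := Iι) j₁0 r sπ j₂0 s k₂ jj₂ θ hdec huniq (ψ 1)⁻¹
  refine ⟨(ψ 1)⁻¹, inv_mul_eq_one.mp (eq_one_of_apply_inl_eq H j₁0 r sπ j₂0 s k₂ jj₂ θ hr0
    hcos hdec huniq (Φ₀⁻¹ * Φ) fun g => ?_)⟩
  rw [← map_inv, Subgroup.coe_mul, Equiv.Perm.mul_apply, hψ, coe_mainPhiAut]
  simp only [mainPhi, inv_inv, Sum.inl.injEq]
  rw [hψ_mul g, mul_inv_cancel_right]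

include hr0 hcos hKgen hs0 hPgen hθ in
theorem exists_eq_of_mem_relArrowAut
    {p : relAut (cayRelFull H (Iπ := Iπ) rι j₁0 r j₂0) ×
      relAut (mainRel H (Iι := Iι) j₁0 r sπ j₂0 s k₂ jj₂ θ)}
    (hp : p ∈ relArrowAut (cayRelFull H (Iπ := Iπ) rι j₁0 r j₂0)
      (mainRel H (Iι := Iι) j₁0 r sπ j₂0 s k₂ jj₂ θ) (mainArrow H j₂0)) :
    ∃ g₁ g₂, (g₁, g₂) ∈ H ∧ cayAut H rι j₁0 r j₂0 g₁ = p.1 ∧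
      mainPhiAut H j₁0 r sπ j₂0 s k₂ jj₂ θ hdec huniq g₂ = p.2 := by
  obtain ⟨g₁, h₁⟩ := cayAut_surjective H rι j₁0 r j₂0 hr0 hcos hKgen p.1
  obtain ⟨g₂, h₂⟩ :=
    mainPhiAut_surjective H j₁0 r sπ j₂0 s k₂ jj₂ θ hr0 hcos hs0 hPgen hdec huniq p.2
  refine ⟨g₁, g₂, (mainPhi_mainArrow_eq_iff_mem H j₂0 s k₂ jj₂ θ hs0 hdec huniq hθ g₁ g₂).mp
    fun g => ?_, h₁, h₂⟩
  rw [← coe_mainPhiAut H j₁0 r sπ j₂0 s k₂ jj₂ θ hdec huniq, h₂, ← hp g, ← h₁, coe_cayAut]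

noncomputable def arrowAutHom :
    H →* relArrowAut (cayRelFull H (Iπ := Iπ) rι j₁0 r j₂0)
      (mainRel H (Iι := Iι) j₁0 r sπ j₂0 s k₂ jj₂ θ) (mainArrow H j₂0) :=
  (((cayAut H rι j₁0 r j₂0).prodMap
    (mainPhiAut H j₁0 r sπ j₂0 s k₂ jj₂ θ hdec huniq)).comp H.subtype).codRestrict _ fun h v =>
      ((mainPhi_mainArrow_eq_iff_mem H j₂0 s k₂ jj₂ θ hs0 hdec huniq hθ _ _).mpr h.2 v).symm

include hr0 hcos hKgen hPgen in
theorem arrowAutHom_bijective :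
    Function.Bijective (arrowAutHom H rι j₁0 r sπ j₂0 s k₂ jj₂ θ hs0 hdec huniq hθ) := by
  refine ⟨fun a b h => ?_, fun p => ?_⟩
  · have h' := congrArg Subtype.val h
    exact Subtype.ext (Prod.ext
      (mulRightInvHom_injective G₁ (congrArg Subtype.val (congrArg Prod.fst h')))
      (mainPhiAut_injective H j₁0 r sπ j₂0 s k₂ jj₂ θ hdec huniq (congrArg Prod.snd h')))
  · obtain ⟨g₁, g₂, hg, h₁, h₂⟩ := exists_eq_of_mem_relArrowAut H rι j₁0 r sπ j₂0 s k₂ jj₂ θ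
      hr0 hcos hKgen hs0 hPgen hdec huniq hθ p.2
    exact ⟨⟨(g₁, g₂), hg⟩, Subtype.ext (Prod.ext h₁ h₂)⟩

end Systems

/-- The pair `(φ_{g̃₁}, Φ_{g̃₂})` commutes with the morphism `φ' : Cay(G₁, R) → G₂'`
if and only if `(g̃₁, g̃₂) ∈ H`; consequently
`Aut_I(φ') = {(φ_{g̃₁}, Φ_{g̃₂}) | (g̃₁, g̃₂) ∈ H}` and `Aut_I(φ') ≅ H`. -/
theorem arrow_automorphisms_are_H {G₁ G₂ : Type u} [Group G₁] [Group G₂]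
    (H : Subgroup (G₁ × G₂)) {Iι J₁ Iπ J₂ : Type u}
    (rι : Iι → kerFst H) (j₁0 : J₁) (r : J₁ → G₁)
    (sπ : Iπ → projSnd H) (j₂0 : J₂) (s : J₂ → G₂)
    (k₂ : G₂ → projSnd H) (jj₂ : G₂ → J₂) (θ : QuotFst H ≃* QuotSnd H)
    (hr0 : r j₁0 = 1)
    (hcos : ∀ g : G₁, ∃! j : J₁, g * (r j)⁻¹ ∈ kerFst H)
    (hKgen : Subgroup.closure (Set.range fun i => ((rι i : G₁))) = kerFst H)
    (hs0 : s j₂0 = 1)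
    (hPgen : Subgroup.closure (Set.range fun i => ((sπ i : G₂))) = projSnd H)
    (hdec : ∀ g : G₂, (k₂ g : G₂) * s (jj₂ g) = g)
    (huniq : ∀ (g : G₂) (κ : projSnd H) (l : J₂), (κ : G₂) * s l = g → κ = k₂ g ∧ l = jj₂ g)
    (hθ : ∀ (x : projFst H) (y : projSnd H),
      θ (QuotientGroup.mk x) = QuotientGroup.mk y ↔ ((x : G₁), (y : G₂)) ∈ H)
 :
    (∀ (i : FullLabel Iι J₁ Iπ J₂ j₁0 j₂0) (g g' : G₁),
      cayRelFull H rι j₁0 r j₂0 i g g' →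
        mainRel H (Iι := Iι) j₁0 r sπ j₂0 s k₂ jj₂ θ i
          (mainArrow H j₂0 g) (mainArrow H j₂0 g')) ∧
    (∀ (g₁ : G₁) (g₂ : G₂),
      (∀ g : G₁, mainPhi H s k₂ jj₂ θ g₂ (mainArrow H j₂0 g) = mainArrow H j₂0 (g * g₁⁻¹))
        ↔ (g₁, g₂) ∈ H) ∧
    (∀ p : relAut (cayRelFull H (Iπ := Iπ) rι j₁0 r j₂0) ×
        relAut (mainRel H (Iι := Iι) j₁0 r sπ j₂0 s k₂ jj₂ θ),
      p ∈ relArrowAut (cayRelFull H (Iπ := Iπ) rι j₁0 r j₂0)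
          (mainRel H (Iι := Iι) j₁0 r sπ j₂0 s k₂ jj₂ θ) (mainArrow H j₂0) ↔
        ∃ (g₁ : G₁) (g₂ : G₂), (g₁, g₂) ∈ H ∧
          ⇑(p.1 : Equiv.Perm G₁) = (fun g => g * g₁⁻¹) ∧
          ⇑(p.2 : Equiv.Perm (MainVert H J₂)) = mainPhi H s k₂ jj₂ θ g₂) ∧
    Nonempty (relArrowAut (cayRelFull H (Iπ := Iπ) rι j₁0 r j₂0)
        (mainRel H (Iι := Iι) j₁0 r sπ j₂0 s k₂ jj₂ θ) (mainArrow H j₂0) ≃* H) := by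
  have hcomm := mainPhi_mainArrow_eq_iff_mem H j₂0 s k₂ jj₂ θ hs0 hdec huniq hθ
  refine ⟨mainArrow_rel H rι j₁0 r sπ j₂0 s k₂ jj₂ θ, hcomm, fun p => ⟨fun hp => ?_, ?_⟩,
    ⟨(MulEquiv.ofBijective _ (arrowAutHom_bijective H rι j₁0 r sπ j₂0 s k₂ jj₂ θ hr0 hcos hKgen
      hs0 hPgen hdec huniq hθ)).symm⟩⟩
  · obtain ⟨g₁, g₂, hg, h₁, h₂⟩ := exists_eq_of_mem_relArrowAut H rι j₁0 r sπ j₂0 s k₂ jj₂ θ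
      hr0 hcos hKgen hs0 hPgen hdec huniq hθ hp
    exact ⟨g₁, g₂, hg, h₁ ▸ rfl, h₂ ▸ rfl⟩
  · rintro ⟨g₁, g₂, hg, h₁, h₂⟩ v
    change mainArrow H j₂0 ((p.1 : Equiv.Perm G₁) v) = (p.2 : Equiv.Perm _) (mainArrow H j₂0 v)
    rw [h₁, h₂]
    exact ((hcomm g₁ g₂).mpr hg v).symm
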